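/- arXiv:2512.17068 — 4 statements merged into one kernel-verified Lean document; each statement's English description precedes it below -/
import Mathlib

section
/- Let G be a finite group and n ≥ 2. If a class [ω] ∈ H^n(G,U(1)) lies in Sha^n(G), i.e., the image of [ω] under the restriction map H^n(G,U(1)) → H^n(B,U(1)) is trivial for every abelian subgroup B ≤ G, then [ω] is untwisted: ∏_{σ ∈ S_n} ω(g_{σ(1)},…,g_{σ(n)})^{sgn(σ)} = 1 for every commuting n-tuple (g_1,…,g_n) ∈ X_n(G). Hence Sha^n(G) ⊆ Br^n(G). -/
namespace DT

variable {G : Type*} [Group G] {A : Type*} [AddCommGroup A]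

/-- Merge positions `i` and `i+1` of an `(n+1)`-tuple (bar-complex face map):
for `j < i` entry `g j`, at `j = i` entry `g i * g (i+1)`, for `j > i` entry `g (j+1)`. -/
def barMerge {n : ℕ} (g : Fin (n+1) → G) (i : Fin n) : Fin n → G :=
  fun j => if (j : ℕ) < (i : ℕ) then g j.castSucc
    else if (j : ℕ) = (i : ℕ) then g j.castSucc * g j.succ
    else g j.succ

/-- The inhomogeneous (bar) coboundary of an `n`-cochain with values in a trivial module:
`(δω)(g_1,…,g_{n+1}) = ω(g_2,…,g_{n+1}) + Σ_{i=1}^{n} (−1)^i ω(g_1,…,g_i g_{i+1},…,g_{n+1})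
 + (−1)^{n+1} ω(g_1,…,g_n)`. -/
def coboundary {n : ℕ} (ω : (Fin n → G) → A) : (Fin (n+1) → G) → A :=
  fun g => ω (fun j => g j.succ)
    + ∑ i : Fin n, ((-1 : ℤ) ^ ((i : ℕ) + 1)) • ω (barMerge g i)
    + ((-1 : ℤ) ^ (n+1)) • ω (fun j => g j.castSucc)

/-- An `n`-cocycle. -/
def IsCocycle {n : ℕ} (ω : (Fin n → G) → A) : Prop := coboundary ω = 0

/-- An `(n+1)`-coboundary. -/
def IsCoboundary {n : ℕ} (ω : (Fin (n+1) → G) → A) : Prop := ∃ α, ω = coboundary α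

/-- A commuting tuple. -/
def IsCommTuple {n : ℕ} (g : Fin n → G) : Prop := ∀ i j, g i * g j = g j * g i

/-- The Dijkgraaf–Witten weight `W_ω(𝐠) = Σ_{σ ∈ S_n} sgn(σ) • ω(g_{σ(1)},…,g_{σ(n)})`. -/
def dwWeight {n : ℕ} (ω : (Fin n → G) → A) (g : Fin n → G) : A :=
  ∑ σ : Equiv.Perm (Fin n), ((Equiv.Perm.sign σ : ℤ)) • ω (g ∘ σ)

end DT

namespace DT

variable {G : Type*} [Group G]

/-- The inhomogeneous (bar) coboundary of a `U(1)`-valued `n`-cochain, written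
multiplicatively. -/
noncomputable def mcoboundary {n : ℕ} (ω : (Fin n → G) → Circle) : (Fin (n+1) → G) → Circle :=
  fun g => ω (fun j => g j.succ)
    * (∏ i : Fin n, ω (barMerge g i) ^ ((-1 : ℤ) ^ ((i : ℕ) + 1)))
    * ω (fun j => g j.castSucc) ^ ((-1 : ℤ) ^ (n+1))

/-- A `U(1)`-valued `n`-cocycle. -/
def IsMCocycle {n : ℕ} (ω : (Fin n → G) → Circle) : Prop := mcoboundary ω = 1

/-- A `U(1)`-valued `(n+1)`-coboundary. -/
def IsMCoboundary {n : ℕ} (ω : (Fin (n+1) → G) → Circle) : Prop := ∃ α, ω = mcoboundary α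

/-- The Dijkgraaf–Witten weight `W_ω(𝐠) = ∏_{σ ∈ S_n} ω(g_{σ(1)},…,g_{σ(n)})^{sgn(σ)}`. -/
noncomputable def mdwWeight {n : ℕ} (ω : (Fin n → G) → Circle) (g : Fin n → G) : Circle :=
  ∏ σ : Equiv.Perm (Fin n), ω (g ∘ σ) ^ ((Equiv.Perm.sign σ : ℤ))

end DT

/-!
The commuting tuple `g` lies in the abelian subgroup `B` it generates, the Dijkgraaf–Witten
weight of `ω` at `g` only sees `ω` on `B`, and there `ω = δα`. The weight of `δα` at a commuting
tuple is trivial: the faces merging positions `i, i+1` cancel between `σ` and `σ * (i i+1)`,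
which give the same merged tuple with opposite signs, and the two outer faces cancel each other
after reindexing by the rotation `finRotate`, whose sign `(-1)^(n+1)` makes up for the sign of
the last face.
-/

namespace DT
open Equiv Equiv.Perm

section
variable {M : Type*} [CommGroup M]

theorem prod_zpow_sign_eq_one_of_mul_swap {ι : Type*} [Fintype ι] [DecidableEq ι]
    (F : Perm ι → M) {x y : ι} (hxy : x ≠ y) (hF : ∀ σ, F (σ * swap x y) = F σ) :
    ∏ σ, F σ ^ (sign σ : ℤ) = 1 := by
  refine Finset.prod_ninvolution (fun σ => σ * swap x y) (fun σ => ?_) (fun σ _ => ?_)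
    (fun _ => Finset.mem_univ _) (fun σ => by simp [mul_assoc])
  · rw [hF, Perm.sign_mul, sign_swap hxy, ← zpow_add]
    simp
  · simpa using hxy

theorem prod_zpow_sign_comp_castSucc {X : Type*} {n : ℕ} (f : (Fin (n+1) → X) → M)
    (g : Fin (n+2) → X) :
    ∏ σ : Perm (Fin (n+2)), f (fun j => g (σ j.castSucc)) ^ (sign σ : ℤ)
      = (∏ σ : Perm (Fin (n+2)), f (fun j => g (σ j.succ)) ^ (sign σ : ℤ))
          ^ (-1 : ℤ) ^ (n+1) := by
  rw [← Equiv.prod_comp (Equiv.mulRight (finRotate (n+2)))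
    (fun σ => f (fun j => g (σ j.castSucc)) ^ (sign σ : ℤ)), ← Finset.prod_zpow]
  refine Finset.prod_congr rfl fun σ _ => ?_
  simp only [coe_mulRight, Perm.mul_apply, finRotate_apply, Fin.coeSucc_eq_succ, Perm.sign_mul,
    sign_finRotate]
  rw [← zpow_mul]
  push_cast
  ring_nf

end

variable {G : Type*} [Group G]

theorem barMerge_comp_swap {n : ℕ} {g : Fin (n+2) → G} (i : Fin (n+1))
    (hi : g i.castSucc * g i.succ = g i.succ * g i.castSucc) :
    barMerge (g ∘ swap i.castSucc i.succ) i = barMerge g i := by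
  funext j
  simp only [barMerge, Function.comp]
  rcases lt_trichotomy (j : ℕ) i with h | h | h
  · rw [if_pos h, if_pos h, swap_apply_of_ne_of_ne] <;> simp [Fin.ext_iff] <;> omega
  · obtain rfl : j = i := Fin.ext h
    simpa using hi.symm
  · rw [if_neg (by omega), if_neg (by omega), if_neg (by omega), if_neg (by omega),
      swap_apply_of_ne_of_ne] <;> simp [Fin.ext_iff] <;> omega

theorem mdwWeight_mcoboundary {n : ℕ} (α : (Fin (n+1) → G) → Circle) {g : Fin (n+2) → G}
    (hg : IsCommTuple g) : mdwWeight (mcoboundary α) g = 1 := by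
  have merged : ∀ i : Fin (n+1),
      ∏ σ : Perm (Fin (n+2)), α (barMerge (g ∘ σ) i) ^ (sign σ : ℤ) = 1 := fun i =>
    prod_zpow_sign_eq_one_of_mul_swap _ (Fin.castSucc_lt_succ (i := i)).ne fun σ => by
      rw [coe_mul, ← Function.comp_assoc, barMerge_comp_swap (g := g ∘ σ) i (hg _ _)]
  simp only [mdwWeight, mcoboundary, Function.comp_apply, mul_zpow, Finset.prod_mul_distrib,
    ← zpow_mul]
  have middle : ∏ σ : Perm (Fin (n+2)),
      (∏ i, α (barMerge (g ∘ σ) i) ^ (-1 : ℤ) ^ ((i : ℕ) + 1)) ^ (sign σ : ℤ) = 1 := by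
    simp_rw [← Finset.prod_zpow, ← zpow_mul, zpow_mul']
    rw [Finset.prod_comm]
    simp_rw [Finset.prod_zpow, merged, one_zpow, Finset.prod_const_one]
  have last : ∏ σ : Perm (Fin (n+2)),
      (α fun j => g (σ j.castSucc)) ^ ((-1 : ℤ) ^ (n + 1 + 1) * (sign σ : ℤ))
      = (∏ σ : Perm (Fin (n+2)), (α fun j => g (σ j.succ)) ^ (sign σ : ℤ))⁻¹ := by
    rw [← zpow_neg_one]
    simp_rw [zpow_mul', Finset.prod_zpow, prod_zpow_sign_comp_castSucc α g, ← zpow_mul]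
    congr 1
    rw [← pow_add]
    exact Odd.neg_one_pow ⟨n + 1, by ring⟩
  rw [middle, mul_one, last, mul_inv_cancel]

theorem IsCommTuple.closure_range_comm {n : ℕ} {g : Fin n → G} (hg : IsCommTuple g) :
    ∀ a ∈ Subgroup.closure (Set.range g), ∀ b ∈ Subgroup.closure (Set.range g),
      a * b = b * a := by
  have hcomm : ∀ x ∈ Set.range g, ∀ y ∈ Set.range g, x * y = y * x := by
    rintro _ ⟨i, rfl⟩ _ ⟨j, rfl⟩
    exact hg i j
  have hle := Subgroup.closure_le_centralizer_centralizer (Set.range g)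
  exact fun a ha b hb => Set.centralizer_centralizer_comm_of_comm hcomm a (hle ha) b (hle hb)

end DT

open DT in
theorem stmt7_general (G : Type*) [Group G] (m : ℕ)
    (ω : (Fin (m+2) → G) → Circle)
    (hSha : ∀ B : Subgroup G, (∀ a ∈ B, ∀ b ∈ B, a * b = b * a) →
      IsMCoboundary (fun b : Fin (m+2) → B => ω (fun i => (b i : G)))) :
    ∀ g : Fin (m+2) → G, IsCommTuple g → mdwWeight ω g = 1 := by
  intro g hg
  let B := Subgroup.closure (Set.range g)
  obtain ⟨α, hα⟩ := hSha B hg.closure_range_comm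
  let b : Fin (m+2) → B := fun i => ⟨g i, Subgroup.subset_closure (Set.mem_range_self i)⟩
  change mdwWeight (fun b : Fin (m+2) → B => ω (fun i => (b i : G))) b = 1
  rw [hα]
  exact mdwWeight_mcoboundary α fun i j => Subtype.ext (hg i j)

open DT in
/-- if the restriction of a class to every abelian subgroup is trivial,
then the class is untwisted: `Shaⁿ(G) ⊆ Brⁿ(G)`. -/
theorem stmt7 (G : Type*) [Group G] [Finite G] (m : ℕ)
    (ω : (Fin (m+2) → G) → Circle) (hω : IsMCocycle ω)
    (hSha : ∀ B : Subgroup G, (∀ a ∈ B, ∀ b ∈ B, a * b = b * a) →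
      IsMCoboundary (fun b : Fin (m+2) → B => ω (fun i => (b i : G)))) :
    ∀ g : Fin (m+2) → G, IsCommTuple g → mdwWeight ω g = 1 :=
  stmt7_general G m ω hSha
end

section
/- Let G be a finite group possessing an abelian normal subgroup A ⊴ G such that the quotient G/A is cyclic. Then Br^2(G) is trivial: every untwisted class in H^2(G,U(1)) is the trivial class. -/
namespace DT

variable {G : Type*} [Group G]

/-- The (inhomogeneous bar) 2-cocycle identity for a `U(1)`-valued 2-cochain, written
multiplicatively: `ω(g₂,g₃)·ω(g₁,g₂g₃) = ω(g₁g₂,g₃)·ω(g₁,g₂)`. -/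
def IsCocycle2 (ω : G → G → Circle) : Prop :=
  ∀ g₁ g₂ g₃ : G, ω g₂ g₃ * ω g₁ (g₂ * g₃) = ω (g₁ * g₂) g₃ * ω g₁ g₂

/-- A `U(1)`-valued 2-coboundary: `ω(g₁,g₂) = α(g₂)·α(g₁g₂)⁻¹·α(g₁)`. -/
def IsCoboundary2 (ω : G → G → Circle) : Prop :=
  ∃ α : G → Circle, ∀ g₁ g₂ : G, ω g₁ g₂ = α g₂ * (α (g₁ * g₂))⁻¹ * α g₁

/-- A 2-cochain is untwisted if `ω(g,h) = ω(h,g)` for all commuting pairs. -/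
def Untwisted2 (ω : G → G → Circle) : Prop :=
  ∀ g h : G, g * h = h * g → ω g h = ω h g

end DT

/-!
Normalize `ω` so that `ω(1, g) = 1` and let `E = U(1) ×_ω G` be the central extension it defines.
Untwistedness says exactly that lifts of commuting elements of `G` commute in `E`; hence the
preimage `A` of `N` is abelian, and no nontrivial element of `U(1)` is a single commutator in `E`.
If `e` lifts a generator of `E/A ≅ G/N`, every commutator of `E` is of the form `⁅e, a⁆` with
`a ∈ A`, so `U(1)` meets `[E, E]` trivially and embeds into the abelianization of `E`. As `U(1)` is
divisible, hence an injective `ℤ`-module, this embedding has a retraction, which splits the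
extension; a splitting of `E` is precisely a trivialization of `ω`.
-/

open scoped IsMulCommutative commutatorElement

noncomputable section

section AbelianByCyclic

variable {E : Type*} [Group E]

theorem Subgroup.exists_eq_zpow_mul {A : Subgroup E} [A.Normal] {e : E}
    (hgen : ∀ q : E ⧸ A, q ∈ Subgroup.zpowers (e : E ⧸ A)) (x : E) :
    ∃ i : ℤ, ∃ a ∈ A, x = e ^ i * a := by
  obtain ⟨i, hi⟩ := Subgroup.mem_zpowers_iff.mp (hgen x)
  exact ⟨i, (e ^ i)⁻¹ * x, QuotientGroup.eq.mp (by simpa using hi), by group⟩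

theorem commutator_le_of_forall_mem_zpowers {A : Subgroup E} [A.Normal] {e : E}
    (hgen : ∀ q : E ⧸ A, q ∈ Subgroup.zpowers (e : E ⧸ A)) : commutator E ≤ A := by
  have : IsCyclic (E ⧸ A) := ⟨⟨e, hgen⟩⟩
  let _ := IsCyclic.commGroup (α := E ⧸ A)
  exact Subgroup.Normal.quotient_commutative_iff_commutator_le.mp inferInstance

variable (A : Subgroup E) [A.Normal] [IsMulCommutative A]

def Subgroup.commutatorLeftHom (e : E) : A →* A :=
  (MulAut.conjNormal e).toMonoidHom / MonoidHom.id A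

def Subgroup.commutatorsWith (e : E) : Subgroup E :=
  (A.subtype.comp (A.commutatorLeftHom e)).range

theorem Subgroup.mem_commutatorsWith {e x : E} :
    x ∈ A.commutatorsWith e ↔ ∃ a ∈ A, ⁅e, a⁆ = x := by
  simp [commutatorsWith, commutatorLeftHom, commutatorElement_def, div_eq_mul_inv]

variable {A}

theorem Subgroup.commutatorElement_mul_left_of_mem {c b : E} (e : E) (hc : c ∈ A) (hb : b ∈ A) :
    ⁅c * e, b⁆ = ⁅e, b⁆ := by
  have hcomm : c * (e * b * e⁻¹) = e * b * e⁻¹ * c :=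
    setLike_mul_comm hc (Normal.conj_mem inferInstance b hb e)
  simp only [commutatorElement_def]
  calc c * e * b * (c * e)⁻¹ * b⁻¹ = c * (e * b * e⁻¹) * c⁻¹ * b⁻¹ := by group
    _ = e * b * e⁻¹ * c * c⁻¹ * b⁻¹ := by rw [hcomm]
    _ = e * b * e⁻¹ * b⁻¹ := by group

theorem Subgroup.commutatorsWith_normal {e : E}
    (hgen : ∀ q : E ⧸ A, q ∈ Subgroup.zpowers (e : E ⧸ A)) : (A.commutatorsWith e).Normal := by
  refine ⟨fun k hk g => ?_⟩
  obtain ⟨a, ha, rfl⟩ := (mem_commutatorsWith A).mp hk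
  have hge : ⁅g, e⁆ ∈ A := commutator_le_of_forall_mem_zpowers hgen
    (commutator_mem_commutator (mem_top g) (mem_top e))
  have hga : g * a * g⁻¹ ∈ A := Normal.conj_mem inferInstance a ha g
  rw [mem_commutatorsWith, conjugate_commutatorElement]
  refine ⟨g * a * g⁻¹, hga, ?_⟩
  rw [show g * e * g⁻¹ = ⁅g, e⁆ * e by simp only [commutatorElement_def]; group,
    commutatorElement_mul_left_of_mem e hge hga]

theorem commutator_le_commutatorsWith {e : E}
    (hgen : ∀ q : E ⧸ A, q ∈ Subgroup.zpowers (e : E ⧸ A)) :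
    commutator E ≤ A.commutatorsWith e := by
  have := Subgroup.commutatorsWith_normal hgen
  refine Subgroup.Normal.quotient_commutative_iff_commutator_le.mp ⟨⟨fun p q => ?_⟩⟩
  let f := QuotientGroup.mk' (A.commutatorsWith e)
  have hea : ∀ a ∈ A, Commute (f e) (f a) := fun a ha => by
    rw [← commutatorElement_eq_one_iff_commute, ← map_commutatorElement, QuotientGroup.mk'_apply,
      QuotientGroup.eq_one_iff, Subgroup.mem_commutatorsWith]
    exact ⟨a, ha, rfl⟩
  have hab : ∀ a ∈ A, ∀ b ∈ A, Commute (f a) (f b) := fun a ha b hb =>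
    Commute.map (setLike_mul_comm ha hb) f
  induction p using QuotientGroup.induction_on with | H x => ?_
  induction q using QuotientGroup.induction_on with | H y => ?_
  obtain ⟨i, a, ha, rfl⟩ := Subgroup.exists_eq_zpow_mul hgen x
  obtain ⟨j, b, hb, rfl⟩ := Subgroup.exists_eq_zpow_mul hgen y
  change f (e ^ i * a) * f (e ^ j * b) = f (e ^ j * b) * f (e ^ i * a)
  simp only [map_mul, map_zpow]
  exact (((Commute.refl _).zpow_zpow i j).mul_right ((hea b hb).zpow_left i)).mul_left
    (((hea a ha).symm.zpow_right j).mul_right (hab a ha b hb))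

end AbelianByCyclic

theorem forall_mem_zpowers_comap {E G : Type*} [Group E] [Group G] {N : Subgroup G} [N.Normal]
    (π : E →* G) {g : G} (hg : ∀ q : G ⧸ N, q ∈ Subgroup.zpowers (g : G ⧸ N)) {e : E}
    (he : π e = g) (q : E ⧸ N.comap π) : q ∈ Subgroup.zpowers (e : E ⧸ N.comap π) := by
  induction q using QuotientGroup.induction_on with | H x => ?_
  obtain ⟨i, hi⟩ := Subgroup.mem_zpowers_iff.mp (hg (π x))
  refine Subgroup.mem_zpowers_iff.mpr ⟨i, ?_⟩
  rw [← QuotientGroup.mk_zpow, QuotientGroup.eq, Subgroup.mem_comap, map_mul, map_inv, map_zpow,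
    he, ← QuotientGroup.eq, QuotientGroup.mk_zpow, hi]

instance : DivisibleBy (Additive Circle) ℤ :=
  Circle.exp_surjective.divisibleBy Circle.expHom fun x n => map_zsmul Circle.expHom n x

theorem Circle.exists_retraction {Q : Type*} [CommGroup Q] (f : Circle →* Q)
    (hf : Function.Injective f) : ∃ r : Q →* Circle, ∀ u, r (f u) = u := by
  obtain ⟨r, hr⟩ := (Module.Baer.of_divisible (Additive Circle)).extension_property_addMonoidHom
    f.toAdditive hf (AddMonoidHom.id _)
  exact ⟨MonoidHom.toAdditive.symm r, fun u => DFunLike.congr_fun hr (Additive.ofMul u)⟩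

namespace DT

variable {G : Type*} [Group G] {ω : G → G → Circle}

theorem IsCocycle2.mul_const (hc : IsCocycle2 ω) (c : Circle) :
    IsCocycle2 fun g h => ω g h * c := fun g₁ g₂ g₃ => by
  simp only [mul_mul_mul_comm _ c, hc g₁ g₂ g₃]

theorem IsCoboundary2.mul_const (hω : IsCoboundary2 ω) (c : Circle) :
    IsCoboundary2 fun g h => ω g h * c := by
  obtain ⟨α, hα⟩ := hω
  refine ⟨fun g => α g * c, fun g₁ g₂ => ?_⟩
  simp only [hα, mul_inv_rev]
  rw [mul_assoc (α g₂) c, mul_inv_cancel_left]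
  ac_rfl

theorem Untwisted2.mul_const (hu : Untwisted2 ω) (c : Circle) :
    Untwisted2 fun g h => ω g h * c := fun g h hgh => by
  simp only [hu g h hgh]

theorem IsCocycle2.apply_one_left (hc : IsCocycle2 ω) (g : G) : ω 1 g = ω 1 1 := by
  simpa using hc 1 1 g

theorem IsCocycle2.apply_one_right (hc : IsCocycle2 ω) (g : G) : ω g 1 = ω 1 1 := by
  simpa [mul_comm] using (hc g 1 1).symm

structure NormalizedCocycle2 (G : Type*) [Group G] where
  toFun : G → G → Circle
  isCocycle2 : IsCocycle2 toFun
  apply_one_left : ∀ g, toFun 1 g = 1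

def IsCocycle2.normalize (hc : IsCocycle2 ω) : NormalizedCocycle2 G where
  toFun g h := ω g h * (ω 1 1)⁻¹
  isCocycle2 := hc.mul_const _
  apply_one_left g := by rw [hc.apply_one_left, mul_inv_cancel]

namespace NormalizedCocycle2

variable (σ : NormalizedCocycle2 G)

theorem apply_one_right (g : G) : σ.toFun g 1 = 1 := by
  rw [σ.isCocycle2.apply_one_right, σ.apply_one_left]

theorem apply_inv_self (g : G) : σ.toFun g⁻¹ g = σ.toFun g g⁻¹ := by
  simpa [σ.apply_one_left, σ.apply_one_right] using σ.isCocycle2 g g⁻¹ g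

end NormalizedCocycle2

@[ext]
structure CocycleExtension (σ : NormalizedCocycle2 G) where
  z : Circle
  g : G

namespace CocycleExtension

variable {σ : NormalizedCocycle2 G}

instance : Mul (CocycleExtension σ) := ⟨fun x y => ⟨x.z * y.z * σ.toFun x.g y.g, x.g * y.g⟩⟩
instance : One (CocycleExtension σ) := ⟨⟨1, 1⟩⟩
instance : Inv (CocycleExtension σ) := ⟨fun x => ⟨(x.z * σ.toFun x.g x.g⁻¹)⁻¹, x.g⁻¹⟩⟩

@[simp] theorem mul_z (x y : CocycleExtension σ) : (x * y).z = x.z * y.z * σ.toFun x.g y.g := rfl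
@[simp] theorem mul_g (x y : CocycleExtension σ) : (x * y).g = x.g * y.g := rfl
@[simp] theorem one_z : (1 : CocycleExtension σ).z = 1 := rfl
@[simp] theorem one_g : (1 : CocycleExtension σ).g = 1 := rfl
@[simp] theorem inv_z (x : CocycleExtension σ) : x⁻¹.z = (x.z * σ.toFun x.g x.g⁻¹)⁻¹ := rfl
@[simp] theorem inv_g (x : CocycleExtension σ) : x⁻¹.g = x.g⁻¹ := rfl

instance : Group (CocycleExtension σ) := Group.ofLeftAxioms
  (fun x y w => by
    apply CocycleExtension.ext
    · simp only [mul_z, mul_g]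
      calc x.z * y.z * σ.toFun x.g y.g * w.z * σ.toFun (x.g * y.g) w.g
          = x.z * y.z * w.z * (σ.toFun (x.g * y.g) w.g * σ.toFun x.g y.g) := by ac_rfl
        _ = x.z * y.z * w.z * (σ.toFun y.g w.g * σ.toFun x.g (y.g * w.g)) := by
          rw [σ.isCocycle2]
        _ = x.z * (y.z * w.z * σ.toFun y.g w.g) * σ.toFun x.g (y.g * w.g) := by ac_rfl
    · exact mul_assoc x.g y.g w.g)
  (fun x => by ext <;> simp [σ.apply_one_left])
  (fun x => by ext <;> simp [σ.apply_inv_self])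

def proj : CocycleExtension σ →* G where
  toFun := g
  map_one' := rfl
  map_mul' _ _ := rfl

def incl : Circle →* CocycleExtension σ where
  toFun u := ⟨u, 1⟩
  map_one' := rfl
  map_mul' _ _ := by ext <;> simp [σ.apply_one_left]

theorem incl_injective : Function.Injective (incl (σ := σ)) := fun _ _ h =>
  congrArg z h

theorem lift_mul_lift (g h : G) :
    (⟨1, g⟩ * ⟨1, h⟩ : CocycleExtension σ) = incl (σ.toFun g h) * ⟨1, g * h⟩ := by
  ext <;> simp [incl, σ.apply_one_left]

theorem commute_of_untwisted (hu : Untwisted2 σ.toFun) {x y : CocycleExtension σ}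
    (h : Commute x.g y.g) : Commute x y := by
  ext
  · simp only [mul_z, hu _ _ h, mul_comm x.z]
  · exact h

theorem eq_one_of_incl_eq_commutatorElement (hu : Untwisted2 σ.toFun) {u : Circle}
    {x y : CocycleExtension σ} (h : incl u = ⁅x, y⁆) : u = 1 := by
  have hxy : Commute x.g y.g := by
    rw [← commutatorElement_eq_one_iff_commute]
    simpa [incl, commutatorElement_def] using (congrArg g h).symm
  rw [commutatorElement_eq_one_iff_commute.mpr (commute_of_untwisted hu hxy)] at h
  exact incl_injective h

theorem isCoboundary2_of_retraction (ρ : CocycleExtension σ →* Circle)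
    (hρ : ∀ u, ρ (incl u) = u) : IsCoboundary2 σ.toFun := by
  refine ⟨fun g => ρ ⟨1, g⟩, fun g h => ?_⟩
  have := congrArg ρ (lift_mul_lift (σ := σ) g h)
  rw [map_mul, map_mul, hρ] at this
  exact (eq_mul_inv_of_mul_eq this.symm).trans (mul_rotate _ _ _)

theorem exists_retraction_of_untwisted {N : Subgroup G} [N.Normal]
    (hab : ∀ a ∈ N, ∀ b ∈ N, a * b = b * a) (hcyc : IsCyclic (G ⧸ N)) (hu : Untwisted2 σ.toFun) :
    ∃ ρ : CocycleExtension σ →* Circle, ∀ u, ρ (incl u) = u := by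
  obtain ⟨q, hq⟩ := hcyc.exists_generator
  obtain ⟨g₀, rfl⟩ := QuotientGroup.mk_surjective q
  let A := N.comap (proj (σ := σ))
  have : IsMulCommutative A := .of_setLike_mul_comm fun x hx y hy =>
    commute_of_untwisted hu (hab _ hx _ hy)
  let e : CocycleExtension σ := ⟨1, g₀⟩
  have hgen : ∀ q : CocycleExtension σ ⧸ A, q ∈ Subgroup.zpowers (e : CocycleExtension σ ⧸ A) :=
    forall_mem_zpowers_comap proj hq rfl
  have hinj : Function.Injective (Abelianization.of.comp (incl (σ := σ))) := by
    refine (injective_iff_map_eq_one _).mpr fun u hu₁ => ?_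
    have hcomm : incl u ∈ commutator (CocycleExtension σ) := by
      rw [← Abelianization.ker_of]
      exact hu₁
    obtain ⟨a, -, ha⟩ :=
      (Subgroup.mem_commutatorsWith A).mp (commutator_le_commutatorsWith hgen hcomm)
    exact eq_one_of_incl_eq_commutatorElement hu ha.symm
  obtain ⟨r, hr⟩ := Circle.exists_retraction _ hinj
  exact ⟨r.comp Abelianization.of, hr⟩

end CocycleExtension

end DT

end

open DT in
theorem stmt12_general (G : Type*) [Group G] (N : Subgroup G) (hN : N.Normal)
    (hab : ∀ a ∈ N, ∀ b ∈ N, a * b = b * a) (hcyc : IsCyclic (G ⧸ N))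
    (ω : G → G → Circle) (hc : IsCocycle2 ω) (hu : Untwisted2 ω) :
    IsCoboundary2 ω := by
  obtain ⟨ρ, hρ⟩ := CocycleExtension.exists_retraction_of_untwisted (σ := hc.normalize) hab hcyc
    (hu.mul_const _)
  simpa [IsCocycle2.normalize] using
    (CocycleExtension.isCoboundary2_of_retraction ρ hρ).mul_const (ω 1 1)

open DT in
/-- if `G` has an abelian normal subgroup with cyclic quotient, then
`Br²(G)` is trivial. -/
theorem stmt12 (G : Type*) [Group G] [Finite G] (N : Subgroup G) (hN : N.Normal)
    (hab : ∀ a ∈ N, ∀ b ∈ N, a * b = b * a) (hcyc : IsCyclic (G ⧸ N))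
    (ω : G → G → Circle) (hc : IsCocycle2 ω) (hu : Untwisted2 ω) :
    IsCoboundary2 ω :=
  stmt12_general G N hN hab hcyc ω hc hu
end

section
/- Let G_1 and G_2 be finite groups. The homomorphism Br^2(G_1 × G_2) → Br^2(G_1) × Br^2(G_2), given on each factor by cohomological restriction along the inclusions G_1 ↪ G_1 × G_2 and G_2 ↪ G_1 × G_2, is well defined (restriction of an untwisted class to G_i is untwisted) and is an isomorphism of abelian groups. -/
namespace DT

variable (G : Type*) [Group G]

/-- The 2-cocycles, as a subgroup of the group of `U(1)`-valued 2-cochains. -/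
noncomputable def cocycles2Sub : Subgroup (G → G → Circle) where
  carrier := {ω | IsCocycle2 ω}
  one_mem' := by intro g₁ g₂ g₃; simp
  mul_mem' := by
    intro ω ω' h h' g₁ g₂ g₃
    simp only [Pi.mul_apply]
    rw [mul_mul_mul_comm, h g₁ g₂ g₃, h' g₁ g₂ g₃, mul_mul_mul_comm]
  inv_mem' := by
    intro ω h g₁ g₂ g₃
    simp only [Pi.inv_apply, ← mul_inv]
    rw [h g₁ g₂ g₃]

/-- The 2-coboundary map `α ↦ δα`, `(δα)(g₁,g₂) = α(g₂)·α(g₁g₂)⁻¹·α(g₁)`. -/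
noncomputable def d1hom : (G → Circle) →* (G → G → Circle) where
  toFun α := fun g₁ g₂ => α g₂ * (α (g₁ * g₂))⁻¹ * α g₁
  map_one' := by funext g₁ g₂; simp
  map_mul' := by
    intro α β
    funext g₁ g₂
    simp only [Pi.mul_apply, mul_inv]
    group
    simp [mul_comm, mul_left_comm, mul_assoc]

/-- The 2-coboundaries, as a subgroup of the 2-cochains. -/
noncomputable def coboundaries2Sub : Subgroup (G → G → Circle) := (d1hom G).range

/-- The untwisted 2-cocycles. -/
noncomputable def untwisted2Sub : Subgroup (G → G → Circle) where
  carrier := {ω | IsCocycle2 ω ∧ Untwisted2 ω}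
  one_mem' := ⟨(cocycles2Sub G).one_mem, by intro g h _; rfl⟩
  mul_mem' := by
    intro ω ω' h h'
    exact ⟨(cocycles2Sub G).mul_mem h.1 h'.1, by
      intro g k hgk
      simp only [Pi.mul_apply, h.2 g k hgk, h'.2 g k hgk]⟩
  inv_mem' := by
    intro ω h
    exact ⟨(cocycles2Sub G).inv_mem h.1, by
      intro g k hgk
      simp only [Pi.inv_apply, h.2 g k hgk]⟩

/-- `H²(G,U(1))`: 2-cocycles modulo 2-coboundaries. -/
def H2Grp := cocycles2Sub G ⧸ ((coboundaries2Sub G).subgroupOf (cocycles2Sub G))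

noncomputable instance : CommGroup (H2Grp G) := by unfold H2Grp; infer_instance

/-- `Br²(G)`: the subgroup of `H²(G,U(1))` of classes of untwisted cocycles. -/
noncomputable def Br2Sub : Subgroup (H2Grp G) :=
  Subgroup.map (QuotientGroup.mk' ((coboundaries2Sub G).subgroupOf (cocycles2Sub G)))
    ((untwisted2Sub G).subgroupOf (cocycles2Sub G))

variable {G}
variable {K : Type*} [Group K]

/-- Restriction of 2-cocycles along a group homomorphism. -/
noncomputable def res2Cocycle (f : K →* G) : cocycles2Sub G →* cocycles2Sub K where
  toFun ω := ⟨fun a b => (ω : G → G → Circle) (f a) (f b), by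
    intro a b c
    simpa [map_mul] using ω.2 (f a) (f b) (f c)⟩
  map_one' := rfl
  map_mul' := fun _ _ => rfl

/-- The restriction map `H²(G,U(1)) →* H²(K,U(1))` induced by `f : K →* G`. -/
noncomputable def res2 (f : K →* G) : H2Grp G →* H2Grp K :=
  QuotientGroup.lift _
    ((QuotientGroup.mk' ((coboundaries2Sub K).subgroupOf (cocycles2Sub K))).comp
      (res2Cocycle f))
    (by
      intro ω hω
      obtain ⟨α, hα⟩ := MonoidHom.mem_range.mp (Subgroup.mem_subgroupOf.mp hω)
      have hmem : res2Cocycle f ω ∈ (coboundaries2Sub K).subgroupOf (cocycles2Sub K) := by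
        rw [Subgroup.mem_subgroupOf]
        refine MonoidHom.mem_range.mpr ⟨α ∘ f, ?_⟩
        funext a b
        have h2 := congrFun (congrFun hα (f a)) (f b)
        simpa [d1hom, res2Cocycle, map_mul] using h2
      exact (QuotientGroup.eq_one_iff _).mpr hmem)

end DT

/-!
Elements of `G₁ × {1}` commute with those of `{1} × G₂`, so an untwisted 2-cocycle `ω` on
`G₁ × G₂` takes equal values on `((1,x),(a,1))` and `((a,1),(1,x))`. With four instances of the
cocycle identity this shows that `ω` differs from the product cocycle
`((a,x),(b,y)) ↦ ω((a,1),(b,1)) · ω((1,x),(1,y))` of its two restrictions by the coboundary of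
`g ↦ ω((g.1,1),(1,g.2))`, so a class whose restrictions both vanish vanishes. Conversely, the
product of untwisted cocycles `ω₁`, `ω₂` is untwisted and restricts to `ω₁` and `ω₂` up to a
constant, which is a coboundary.
-/

namespace DT

section

variable {G K : Type*} [Group G] [Group K]

theorem mem_coboundaries2Sub_iff {ω : G → G → Circle} :
    ω ∈ coboundaries2Sub G ↔ IsCoboundary2 ω := by
  constructor
  · rintro ⟨α, rfl⟩
    exact ⟨α, fun _ _ => rfl⟩
  · rintro ⟨α, hα⟩
    exact ⟨α, funext₂ fun g₁ g₂ => (hα g₁ g₂).symm⟩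

theorem isCoboundary2_const (c : Circle) : IsCoboundary2 (fun _ _ : G => c) :=
  ⟨fun _ => c, fun _ _ => by simp⟩

theorem Untwisted2.comp {ω : G → G → Circle} (hω : Untwisted2 ω) (f : K →* G) :
    Untwisted2 (fun a b => ω (f a) (f b)) :=
  fun a b hab => hω _ _ (by rw [← map_mul, hab, map_mul])

namespace H2Grp

variable (G) in
noncomputable def mk : cocycles2Sub G →* H2Grp G := QuotientGroup.mk' _

theorem mk_eq_one_iff {ω : cocycles2Sub G} :
    mk G ω = 1 ↔ IsCoboundary2 (ω : G → G → Circle) :=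
  (QuotientGroup.eq_one_iff ω).trans (Subgroup.mem_subgroupOf.trans mem_coboundaries2Sub_iff)

theorem mk_eq_mk_iff {ω ω' : cocycles2Sub G} :
    mk G ω = mk G ω' ↔ IsCoboundary2 ((ω : G → G → Circle)⁻¹ * (ω' : G → G → Circle)) :=
  QuotientGroup.eq.trans (Subgroup.mem_subgroupOf.trans mem_coboundaries2Sub_iff)

end H2Grp

open H2Grp

theorem res2_mk (f : K →* G) (ω : cocycles2Sub G) :
    res2 f (mk G ω) = mk K (res2Cocycle f ω) :=
  rfl

theorem mem_Br2Sub_iff {x : H2Grp G} :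
    x ∈ Br2Sub G ↔ ∃ ω : cocycles2Sub G, Untwisted2 (ω : G → G → Circle) ∧ mk G ω = x :=
  Subgroup.mem_map.trans <| exists_congr fun ω => and_congr_left' (and_iff_right ω.2)

theorem res2_mem_Br2Sub (f : K →* G) {x : H2Grp G} (hx : x ∈ Br2Sub G) : res2 f x ∈ Br2Sub K := by
  obtain ⟨ω, hω, rfl⟩ := mem_Br2Sub_iff.mp hx
  exact mem_Br2Sub_iff.mpr ⟨_, hω.comp f, rfl⟩

end

section Product

variable {G₁ G₂ : Type*} [Group G₁] [Group G₂]

noncomputable def cochainProd (ω₁ : G₁ → G₁ → Circle) (ω₂ : G₂ → G₂ → Circle) :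
    G₁ × G₂ → G₁ × G₂ → Circle :=
  fun g h => ω₁ g.1 h.1 * ω₂ g.2 h.2

variable {ω₁ : G₁ → G₁ → Circle} {ω₂ : G₂ → G₂ → Circle}

theorem IsCocycle2.prod (h₁ : IsCocycle2 ω₁) (h₂ : IsCocycle2 ω₂) :
    IsCocycle2 (cochainProd ω₁ ω₂) := by
  intro g₁ g₂ g₃
  simp only [cochainProd, Prod.fst_mul, Prod.snd_mul]
  rw [mul_mul_mul_comm, h₁, h₂, mul_mul_mul_comm]

theorem IsCoboundary2.prod (h₁ : IsCoboundary2 ω₁) (h₂ : IsCoboundary2 ω₂) :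
    IsCoboundary2 (cochainProd ω₁ ω₂) := by
  obtain ⟨α₁, hα₁⟩ := h₁
  obtain ⟨α₂, hα₂⟩ := h₂
  refine ⟨fun g => α₁ g.1 * α₂ g.2, fun _ _ => ?_⟩
  simp only [cochainProd, hα₁, hα₂, Prod.fst_mul, Prod.snd_mul, mul_inv]
  ac_rfl

theorem Untwisted2.prod (h₁ : Untwisted2 ω₁) (h₂ : Untwisted2 ω₂) :
    Untwisted2 (cochainProd ω₁ ω₂) := fun _ _ hgh =>
  congrArg₂ (· * ·) (h₁ _ _ congr(($hgh).1)) (h₂ _ _ congr(($hgh).2))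

noncomputable def cocycleProd (ω₁ : cocycles2Sub G₁) (ω₂ : cocycles2Sub G₂) :
    cocycles2Sub (G₁ × G₂) :=
  ⟨cochainProd ω₁ ω₂, IsCocycle2.prod ω₁.2 ω₂.2⟩

theorem IsCocycle2.isCoboundary2_inv_mul_cochainProd {ω : G₁ × G₂ → G₁ × G₂ → Circle}
    (hω : IsCocycle2 ω) (hc : ∀ (a : G₁) (x : G₂), ω (1, x) (a, 1) = ω (a, 1) (1, x)) :
    IsCoboundary2 (ω⁻¹ * cochainProd (fun a b => ω (a, 1) (b, 1)) (fun x y => ω (1, x) (1, y))) := by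
  refine ⟨fun g => ω (g.1, 1) (1, g.2), ?_⟩
  rintro ⟨a, x⟩ ⟨b, y⟩
  have h₁ := hω (a, x) (b, 1) (1, y)
  have h₂ := hω (a * b, 1) (1, x) (1, y)
  have h₃ := hω (a, 1) (1, x) (b, 1)
  have h₄ := hω (a, 1) (b, 1) (1, x)
  have h₅ := hc b x
  simp only [Prod.mk_mul_mk, mul_one, one_mul] at h₁ h₂ h₃ h₄
  simp only [Pi.mul_apply, Pi.inv_apply, cochainProd, Prod.mk_mul_mk]
  rw [← Circle.coe_inj] at h₁ h₂ h₃ h₄ h₅ ⊢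
  push_cast at h₁ h₂ h₃ h₄ h₅ ⊢
  field_simp
  linear_combination (ω (a, 1) (b, 1) : ℂ) * h₂ - (ω (a, 1) (1, x) : ℂ) * h₁
    + (ω (a * b, x) (1, y) : ℂ) * (h₃ - h₄ - (ω (a, 1) (b, x) : ℂ) * h₅)

open H2Grp

theorem res2_inl_mk_cocycleProd (ω₁ : cocycles2Sub G₁) (ω₂ : cocycles2Sub G₂) :
    res2 (MonoidHom.inl G₁ G₂) (mk _ (cocycleProd ω₁ ω₂)) = mk G₁ ω₁ := by
  rw [res2_mk, mk_eq_mk_iff]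
  convert isCoboundary2_const ((ω₂ : G₂ → G₂ → Circle) 1 1)⁻¹ using 1
  funext a b
  simp [res2Cocycle, cocycleProd, cochainProd]

theorem res2_inr_mk_cocycleProd (ω₁ : cocycles2Sub G₁) (ω₂ : cocycles2Sub G₂) :
    res2 (MonoidHom.inr G₁ G₂) (mk _ (cocycleProd ω₁ ω₂)) = mk G₂ ω₂ := by
  rw [res2_mk, mk_eq_mk_iff]
  convert isCoboundary2_const ((ω₁ : G₁ → G₁ → Circle) 1 1)⁻¹ using 1
  funext a b
  simp [res2Cocycle, cocycleProd, cochainProd]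

theorem mk_eq_mk_cocycleProd_res2Cocycle (ω : cocycles2Sub (G₁ × G₂))
    (hc : ∀ (a : G₁) (x : G₂), (ω : G₁ × G₂ → G₁ × G₂ → Circle) (1, x) (a, 1) =
      (ω : G₁ × G₂ → G₁ × G₂ → Circle) (a, 1) (1, x)) :
    mk _ ω = mk _ (cocycleProd (res2Cocycle (MonoidHom.inl G₁ G₂) ω)
      (res2Cocycle (MonoidHom.inr G₁ G₂) ω)) :=
  mk_eq_mk_iff.mpr (IsCocycle2.isCoboundary2_inv_mul_cochainProd ω.2 hc)

end Product

end DT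

open DT in
theorem stmt16_general (G₁ G₂ : Type*) [Group G₁] [Group G₂] :
    (∀ x ∈ Br2Sub (G₁ × G₂),
      (res2 (MonoidHom.inl G₁ G₂) x, res2 (MonoidHom.inr G₁ G₂) x)
        ∈ (Br2Sub G₁).prod (Br2Sub G₂)) ∧
    (∀ x ∈ Br2Sub (G₁ × G₂),
      res2 (MonoidHom.inl G₁ G₂) x = 1 → res2 (MonoidHom.inr G₁ G₂) x = 1 → x = 1) ∧
    (∀ y ∈ (Br2Sub G₁).prod (Br2Sub G₂), ∃ x ∈ Br2Sub (G₁ × G₂),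
      (res2 (MonoidHom.inl G₁ G₂) x, res2 (MonoidHom.inr G₁ G₂) x) = y) := by
  refine ⟨fun x hx => ⟨res2_mem_Br2Sub _ hx, res2_mem_Br2Sub _ hx⟩, ?_, ?_⟩
  · intro x hx h₁ h₂
    obtain ⟨ω, hω, rfl⟩ := mem_Br2Sub_iff.mp hx
    rw [res2_mk, H2Grp.mk_eq_one_iff] at h₁ h₂
    have hc : ∀ (a : G₁) (x : G₂), (ω : G₁ × G₂ → G₁ × G₂ → Circle) (1, x) (a, 1) =
        (ω : G₁ × G₂ → G₁ × G₂ → Circle) (a, 1) (1, x) :=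
      fun a x => hω _ _ (Prod.ext (by simp) (by simp))
    rw [mk_eq_mk_cocycleProd_res2Cocycle ω hc, H2Grp.mk_eq_one_iff]
    exact h₁.prod h₂
  · rintro ⟨y₁, y₂⟩ ⟨hy₁, hy₂⟩
    obtain ⟨ω₁, hω₁, rfl⟩ := mem_Br2Sub_iff.mp hy₁
    obtain ⟨ω₂, hω₂, rfl⟩ := mem_Br2Sub_iff.mp hy₂
    exact ⟨_, mem_Br2Sub_iff.mpr ⟨cocycleProd ω₁ ω₂, hω₁.prod hω₂, rfl⟩,
      Prod.ext (res2_inl_mk_cocycleProd ω₁ ω₂) (res2_inr_mk_cocycleProd ω₁ ω₂)⟩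

open DT in
/-- the map `Br²(G₁ × G₂) → Br²(G₁) × Br²(G₂)` given by the two
restrictions is well defined and an isomorphism. -/
theorem stmt16 (G₁ G₂ : Type*) [Group G₁] [Group G₂] [Finite G₁] [Finite G₂] :
    (∀ x ∈ Br2Sub (G₁ × G₂),
      (res2 (MonoidHom.inl G₁ G₂) x, res2 (MonoidHom.inr G₁ G₂) x)
        ∈ (Br2Sub G₁).prod (Br2Sub G₂)) ∧
    (∀ x ∈ Br2Sub (G₁ × G₂),
      res2 (MonoidHom.inl G₁ G₂) x = 1 → res2 (MonoidHom.inr G₁ G₂) x = 1 → x = 1) ∧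
    (∀ y ∈ (Br2Sub G₁).prod (Br2Sub G₂), ∃ x ∈ Br2Sub (G₁ × G₂),
      (res2 (MonoidHom.inl G₁ G₂) x, res2 (MonoidHom.inr G₁ G₂) x) = y) :=
  stmt16_general G₁ G₂
end

section
/- Let G be a finite group, n ≥ 1, and m a positive integer such that m·H_n(G,ℤ) = 0. Then every class in H^n(G,U(1)) has a representative n-cocycle taking values in the subgroup μ_m ≤ U(1) of m-th roots of unity; equivalently, the map H^n(G, μ_m) → H^n(G, U(1)) induced by the inclusion μ_m ↪ U(1) is surjective. -/
namespace DT

/-- The bar chain group `C_n(G)`: the free abelian group on `n`-tuples `[g_1|…|g_n]`. -/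
abbrev BarChain (G : Type*) (n : ℕ) := (Fin n → G) →₀ ℤ

variable (G : Type*) [Group G]

/-- The bar differential `∂_{n+1} : C_{n+1}(G) → C_n(G)`,
`∂[g_1|…|g_{n+1}] = [g_2|…|g_{n+1}] + Σ_{i=1}^{n} (−1)^i [g_1|…|g_i g_{i+1}|…|g_{n+1}]
 + (−1)^{n+1} [g_1|…|g_n]`. -/
noncomputable def barD (n : ℕ) : BarChain G (n+1) →ₗ[ℤ] BarChain G n :=
  (Finsupp.lift (BarChain G n) ℤ (Fin (n+1) → G)) (fun g =>
    Finsupp.single (fun j => g j.succ) 1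
    + ∑ i : Fin n, ((-1 : ℤ) ^ ((i : ℕ) + 1)) • Finsupp.single (barMerge g i) 1
    + ((-1 : ℤ) ^ (n+1)) • Finsupp.single (fun j => g j.castSucc) 1)

/-- The `(n+1)`-cycles `Z_{n+1} = ker ∂_{n+1}`. -/
noncomputable def cycles (n : ℕ) : Submodule ℤ (BarChain G (n+1)) := LinearMap.ker (barD G n)

/-- The `(n+1)`-boundaries `B_{n+1} = im ∂_{n+2}`. -/
noncomputable def boundaries (n : ℕ) : Submodule ℤ (BarChain G (n+1)) :=
  LinearMap.range (barD G (n+1))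

/-- The alternating chain `Σ_{σ ∈ S_n} sgn(σ)·[g_{σ(1)}|…|g_{σ(n)}]`. -/
noncomputable def altCycle {n : ℕ} (g : Fin n → G) : BarChain G n :=
  ∑ σ : Equiv.Perm (Fin n), ((Equiv.Perm.sign σ : ℤ)) • Finsupp.single (g ∘ σ) (1 : ℤ)

/-- `Z_{0n} ⊆ C_n(G)`: the subgroup generated by the alternating chains of commuting tuples. -/
noncomputable def Z0 (n : ℕ) : Submodule ℤ (BarChain G n) :=
  Submodule.span ℤ {x | ∃ g : Fin n → G, IsCommTuple g ∧ x = altCycle G g}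

/-- Integral homology `H_{n+1}(G,ℤ) = Z_{n+1}/B_{n+1}`. -/
def Hgrp (n : ℕ) := cycles G n ⧸ ((boundaries G n).comap (cycles G n).subtype)

/-- `H_{0,n+1}(G,ℤ) = Z_{n+1}/(Z_{0,n+1} + B_{n+1})`. -/
def H0grp (n : ℕ) :=
  cycles G n ⧸ ((Z0 G (n+1) ⊔ boundaries G n).comap (cycles G n).subtype)

noncomputable instance (n : ℕ) : AddCommGroup (Hgrp G n) := by unfold Hgrp; infer_instance
noncomputable instance (n : ℕ) : AddCommGroup (H0grp G n) := by unfold H0grp; infer_instance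

/-- The natural projection `H_{n+1}(G,ℤ) → H_{0,n+1}(G,ℤ)`. -/
noncomputable def projH (n : ℕ) : Hgrp G n →ₗ[ℤ] H0grp G n :=
  Submodule.mapQ _ _ LinearMap.id
    (by
      intro x hx
      exact Submodule.mem_comap.mpr
        (Submodule.mem_sup_right (Submodule.mem_comap.mp hx)))

end DT

/-!
Identify `U(1)`-valued `n`-cochains with homomorphisms `C_n(G) → U(1)`, so that `mcoboundary`
becomes precomposition with `∂`. A cocycle `ω` is then a map `Φ : C_{k+1} → U(1)` killing the
boundaries `B_{k+1}`. Since `G` is finite, `∂(C_{k+1}) ≤ C_k` is free, so `∂` has a section `s`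
over its image and `r = 1 - s ∂` retracts `C_{k+1}` onto the cycles `Z_{k+1}`. The cocycle
`Φ ∘ r` still kills `B_{k+1}`, and it is `m`-torsion because `m • r x ∈ m • Z_{k+1} ≤ B_{k+1}`.
The difference `Φ - Φ ∘ r = Φ ∘ s ∘ ∂` is a coboundary because `U(1)` is divisible, hence
injective, so `Φ ∘ s` extends from `∂(C_{k+1})` to all of `C_k`.
-/

namespace DT

section Splitting

variable {R C₂ C₁ C₀ Q : Type*} [CommRing R]
  [AddCommGroup C₂] [AddCommGroup C₁] [AddCommGroup C₀] [AddCommGroup Q]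
  [Module R C₂] [Module R C₁] [Module R C₀] [Module R Q]

theorem exists_torsion_cocycle_add_coboundary (d₁ : C₁ →ₗ[R] C₀) (d₂ : C₂ →ₗ[R] C₁)
    (hd : d₁ ∘ₗ d₂ = 0) [Module.Projective R (LinearMap.range d₁)] (hQ : Module.Baer R Q)
    {m : R} (htor : ∀ z ∈ LinearMap.ker d₁, m • z ∈ LinearMap.range d₂)
    (Φ : C₁ →ₗ[R] Q) (hΦ : Φ ∘ₗ d₂ = 0) :
    ∃ (Φ' : C₁ →ₗ[R] Q) (F : C₀ →ₗ[R] Q), Φ' ∘ₗ d₂ = 0 ∧ m • Φ' = 0 ∧ Φ = Φ' + F ∘ₗ d₁ := by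
  obtain ⟨s, hs⟩ := Module.projective_lifting_property d₁.rangeRestrict LinearMap.id
    d₁.surjective_rangeRestrict
  have hd₁s : ∀ y, d₁ (s y) = y := fun y => congrArg Subtype.val (DFunLike.congr_fun hs y)
  let r : C₁ →ₗ[R] C₁ := LinearMap.id - s ∘ₗ d₁.rangeRestrict
  have hr_mem_ker : ∀ x, r x ∈ LinearMap.ker d₁ := fun x => by
    simp [r, hd₁s]
  have hr_of_mem_ker : ∀ z ∈ LinearMap.ker d₁, r z = z := fun z hz => by
    have : d₁.rangeRestrict z = 0 := Subtype.ext hz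
    simp [r, this]
  have hΦ_range : ∀ b ∈ LinearMap.range d₂, Φ b = 0 := by
    rintro _ ⟨c, rfl⟩
    exact DFunLike.congr_fun hΦ c
  obtain ⟨F, hF⟩ := hQ.extension_property (LinearMap.range d₁).subtype
    (Submodule.injective_subtype _) (Φ ∘ₗ s)
  refine ⟨Φ ∘ₗ r, F, ?_, ?_, ?_⟩
  · ext c
    rw [LinearMap.comp_apply, LinearMap.comp_apply, LinearMap.zero_apply,
      hr_of_mem_ker _ (DFunLike.congr_fun hd c)]
    exact hΦ_range _ ⟨c, rfl⟩
  · ext x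
    rw [LinearMap.smul_apply, LinearMap.comp_apply, ← map_smul, LinearMap.zero_apply]
    exact hΦ_range _ (htor _ (hr_mem_ker x))
  · ext x
    have hFd₁ : F (d₁ x) = Φ (s (d₁.rangeRestrict x)) :=
      DFunLike.congr_fun hF (d₁.rangeRestrict x)
    simp [r, hFd₁]

end Splitting

noncomputable instance : DivisibleBy (Additive Circle) ℤ :=
  Function.Surjective.divisibleBy Circle.expHom
    (fun z => ⟨Complex.arg (Additive.toMul z : Circle),
      congrArg Additive.ofMul (Circle.exp_arg _)⟩)
    (fun a n => map_zsmul Circle.expHom n a)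

variable {G : Type*}

section CochainEquiv

noncomputable def cochainEquiv (n : ℕ) :
    ((Fin n → G) → Circle) ≃ (BarChain G n →ₗ[ℤ] Additive Circle) :=
  (Equiv.piCongrRight fun _ => Additive.ofMul).trans
    (Finsupp.lift (Additive Circle) ℤ (Fin n → G)).toEquiv

variable {n : ℕ}

@[simp]
lemma cochainEquiv_single (ν : (Fin n → G) → Circle) (g : Fin n → G) :
    cochainEquiv n ν (Finsupp.single g 1) = Additive.ofMul (ν g) := by
  simp [cochainEquiv]

lemma cochainEquiv_symm_apply (N : BarChain G n →ₗ[ℤ] Additive Circle) (g : Fin n → G) :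
    (cochainEquiv n).symm N g = Additive.toMul (N (Finsupp.single g 1)) := by
  conv_rhs => rw [← (cochainEquiv n).apply_symm_apply N, cochainEquiv_single]
  rfl

lemma cochainEquiv_one : cochainEquiv n (1 : (Fin n → G) → Circle) = 0 := by
  ext g; simp

lemma cochainEquiv_mul (ν ν' : (Fin n → G) → Circle) :
    cochainEquiv n (ν * ν') = cochainEquiv n ν + cochainEquiv n ν' := by
  ext g; simp

end CochainEquiv

variable [Group G]

section BarDifferential

/-- `face n i` merges the entries `i - 1` and `i`; `face n 0` and `face n (n + 1)` drop the first
and the last entry. -/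
def face (n i : ℕ) (g : Fin (n+1) → G) : Fin n → G :=
  fun j => if (j : ℕ) + 1 < i then g j.castSucc
    else if (j : ℕ) + 1 = i then g j.castSucc * g j.succ
    else g j.succ

lemma face_zero (n : ℕ) (g : Fin (n+1) → G) : face n 0 g = fun j => g j.succ := by
  funext j; simp [face]

lemma face_last (n : ℕ) (g : Fin (n+1) → G) : face n (n+1) g = fun j => g j.castSucc := by
  funext j; simp [face]

lemma face_succ (n : ℕ) (g : Fin (n+1) → G) (i : Fin n) : face n (i+1) g = barMerge g i := by
  funext j
  simp only [face, barMerge, Nat.add_lt_add_iff_right, Nat.add_right_cancel_iff]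

lemma barD_single (n : ℕ) (g : Fin (n+1) → G) :
    barD G n (Finsupp.single g 1) =
      ∑ i ∈ Finset.range (n+2), (-1 : ℤ) ^ i • Finsupp.single (face n i g) 1 := by
  rw [Finset.sum_range_succ, Finset.sum_range_succ', Finset.sum_range]
  simp only [barD, Finsupp.lift_apply, Finsupp.sum_single_index, zero_smul, one_smul, face_zero,
    face_last, face_succ, pow_zero]
  abel

lemma face_face_of_lt {n i j : ℕ} (hij : i < j) (g : Fin (n+2) → G) :
    face n i (face (n+1) j g) = face n (j-1) (face (n+1) i g) := by
  funext p
  simp only [face, Fin.val_castSucc, Fin.val_succ]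
  split_ifs <;> first | omega | rfl | simp only [Fin.succ_castSucc, mul_assoc]

lemma face_face_term_cancel {n i j : ℕ} (hij : i < j) (g : Fin (n+2) → G) :
    (-1 : ℤ) ^ (j + i) • Finsupp.single (face n i (face (n+1) j g)) (1 : ℤ)
      + (-1 : ℤ) ^ (i + (j - 1)) • Finsupp.single (face n (j-1) (face (n+1) i g)) 1 = 0 := by
  have hsign : (-1 : ℤ) ^ (j + i) = -(-1) ^ (i + (j - 1)) := by
    rw [show j + i = i + (j - 1) + 1 by omega, pow_succ, mul_neg_one]
  rw [face_face_of_lt hij, hsign, neg_smul, neg_add_cancel]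

theorem barD_comp_barD (n : ℕ) : barD G n ∘ₗ barD G (n+1) = 0 := by
  refine Finsupp.lhom_ext' fun g => LinearMap.ext_ring ?_
  simp only [LinearMap.comp_apply, Finsupp.lsingle_apply, LinearMap.zero_apply, barD_single,
    map_sum, map_zsmul, Finset.smul_sum, smul_smul, ← pow_add]
  rw [← Finset.sum_product']
  -- `d_i d_j = d_{j-1} d_i` for `i < j` pairs the term `(j, i)` with the opposite term `(i, j - 1)`
  refine Finset.sum_involution (fun a _ => if a.2 < a.1 then (a.2, a.1 - 1) else (a.2 + 1, a.1))
    ?_ ?_ ?_ ?_ <;> rintro ⟨j, i⟩ hji <;>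
    simp only [Finset.mem_product, Finset.mem_range] at hji <;> dsimp only
  · by_cases h : i < j
    · simpa [h] using face_face_term_cancel h g
    · simpa [h, add_comm] using face_face_term_cancel (n := n) (show j < i + 1 by omega) g
  · intro _
    split_ifs <;> simp only [ne_eq, Prod.mk.injEq] <;> omega
  · split_ifs <;> simp only [Finset.mem_product, Finset.mem_range] <;> omega
  · by_cases h : i < j
    · rw [if_pos h, if_neg (show ¬ j - 1 < i by omega), Prod.mk.injEq]; omega
    · rw [if_neg h, if_pos (show j < i + 1 by omega), Prod.mk.injEq]; omega

end BarDifferential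

lemma cochainEquiv_mcoboundary {n : ℕ} (ν : (Fin n → G) → Circle) :
    cochainEquiv (n+1) (mcoboundary ν) = cochainEquiv n ν ∘ₗ barD G n := by
  ext g
  simp only [LinearMap.comp_apply, Finsupp.lsingle_apply, cochainEquiv_single, barD,
    Finsupp.lift_apply, Finsupp.sum_single_index, zero_smul, one_smul, map_add, map_sum,
    map_zsmul, mcoboundary, ofMul_mul, ofMul_prod, ofMul_zpow]

end DT

open DT in
theorem stmt19_general (G : Type*) [Group G] [Finite G] (k m : ℕ)
    (htor : ∀ z ∈ cycles G k, (m : ℤ) • z ∈ boundaries G k)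
    (ω : (Fin (k+1) → G) → Circle) (hω : IsMCocycle ω) :
    ∃ ω' : (Fin (k+1) → G) → Circle, IsMCocycle ω' ∧ (∀ g, ω' g ^ m = 1) ∧
      ∃ α : (Fin k → G) → Circle, ω = ω' * mcoboundary α := by
  have hΦ : cochainEquiv (k+1) ω ∘ₗ barD G (k+1) = 0 := by
    rw [← cochainEquiv_mcoboundary, hω, cochainEquiv_one]
  obtain ⟨Φ', F, hΦ'_cocycle, hΦ'_torsion, hΦ_eq⟩ :=
    exists_torsion_cocycle_add_coboundary (barD G k) (barD G (k+1)) (barD_comp_barD k)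
      (Module.Baer.of_divisible _) htor _ hΦ
  refine ⟨(cochainEquiv _).symm Φ', ?_, fun g => ?_, (cochainEquiv _).symm F, ?_⟩
  · apply (cochainEquiv _).injective
    rw [cochainEquiv_mcoboundary, Equiv.apply_symm_apply, hΦ'_cocycle, cochainEquiv_one]
  · have hg := DFunLike.congr_fun hΦ'_torsion (Finsupp.single g 1)
    rw [LinearMap.smul_apply, natCast_zsmul, LinearMap.zero_apply] at hg
    rw [cochainEquiv_symm_apply, ← toMul_nsmul, hg, toMul_zero]
  · apply (cochainEquiv _).injective
    rw [cochainEquiv_mul, cochainEquiv_mcoboundary, Equiv.apply_symm_apply,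
      Equiv.apply_symm_apply]
    exact hΦ_eq

open DT in
/-- if `m·Hₙ(G,ℤ) = 0`, every class in `Hⁿ(G,U(1))` has a representative
cocycle with values in the `m`-th roots of unity `μ_m ≤ U(1)`. -/
theorem stmt19 (G : Type*) [Group G] [Finite G] (k m : ℕ) (hm : 0 < m)
    (htor : ∀ z ∈ cycles G k, (m : ℤ) • z ∈ boundaries G k)
    (ω : (Fin (k+1) → G) → Circle) (hω : IsMCocycle ω) :
    ∃ ω' : (Fin (k+1) → G) → Circle, IsMCocycle ω' ∧ (∀ g, ω' g ^ m = 1) ∧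
      ∃ α : (Fin k → G) → Circle, ω = ω' * mcoboundary α :=
  stmt19_general G k m htor ω hω
end
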